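/- arXiv:2001.04822 — 8 statements merged into one kernel-verified Lean document; each statement's English description precedes it below -/
import Mathlib

section
/- Let g be a Lie algebra with trivial center and suppose x·y = [φ(x),y] defines a CPA-structure on g for some linear map φ : g → g. Then φ is a Lie algebra homomorphism. -/
theorem inner_cpa_phi_is_hom_general
    (K : Type*) [Field K] (L : Type*) [LieRing L] [LieAlgebra K L]
    (hZ : LieAlgebra.center K L = ⊥)
    (φ : L →ₗ[K] L)
    (hpost : ∀ x y z : L, ⁅φ ⁅x, y⁆, z⁆ = ⁅φ x, ⁅φ y, z⁆⁆ - ⁅φ y, ⁅φ x, z⁆⁆) :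
    ∀ x y : L, φ ⁅x, y⁆ = ⁅φ x, φ y⁆ := by
  intro x y
  apply LieDerivation.injective_ad_of_center_eq_bot hZ
  ext z
  simp only [LieDerivation.ad_apply_apply, hpost, lie_lie]

/-- If `g` has trivial center and `x·y = ⁅φ(x), y⁆` is a CPA-structure for a linear map `φ`,
then `φ` is a Lie algebra homomorphism. -/
theorem inner_cpa_phi_is_hom
    (K : Type*) [Field K] (L : Type*) [LieRing L] [LieAlgebra K L]
    (hZ : LieAlgebra.center K L = ⊥)
    (φ : L →ₗ[K] L)
    (hcomm : ∀ x y : L, ⁅φ x, y⁆ = ⁅φ y, x⁆)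
    (hpost : ∀ x y z : L, ⁅φ ⁅x, y⁆, z⁆ = ⁅φ x, ⁅φ y, z⁆⁆ - ⁅φ y, ⁅φ x, z⁆⁆)
    (hder : ∀ x y z : L, ⁅φ x, ⁅y, z⁆⁆ = ⁅⁅φ x, y⁆, z⁆ + ⁅y, ⁅φ x, z⁆⁆) :
    ∀ x y : L, φ ⁅x, y⁆ = ⁅φ x, φ y⁆ :=
  inner_cpa_phi_is_hom_general K L hZ φ hpost
end

section
/- Let g be a Lie algebra over an algebraically closed field F and suppose x·y = [φ(x),y] defines a CPA-structure on g, where φ : g → g is linear. If g_α and g_β denote the generalized eigenspaces of φ for eigenvalues α and β, then [g_α, g_β] ≠ 0 implies α + β = 0. -/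
/-!
Commutativity of `x·y = ⁅φ x, y⁆` makes `φ` skew for the bracket: `⁅φ x, y⁆ + ⁅x, φ y⁆ = 0`.
Hence for `x ∈ g_α`, `y ∈ g_β` we get `(α + β) ⁅x, y⁆ = -(⁅(φ - α) x, y⁆ + ⁅x, (φ - β) y⁆)`,
and induction on the nilpotency orders of `φ - α` at `x` and of `φ - β` at `y` shows that
`(α + β) ⁅x, y⁆ = 0`.
-/

namespace LieAlgebra

open Module.End

variable {R L : Type*} [CommRing R] [LieRing L] [LieAlgebra R L]

theorem lie_map_add_lie_map_eq_zero_of_lie_map_comm {φ : L →ₗ[R] L}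
    (hcomm : ∀ x y : L, ⁅φ x, y⁆ = ⁅φ y, x⁆) (x y : L) : ⁅φ x, y⁆ + ⁅x, φ y⁆ = 0 := by
  rw [hcomm, ← lie_skew, neg_add_cancel]

variable {φ : L →ₗ[R] L}

theorem lie_eq_zero_of_pow_sub_smul_apply_eq_zero (hφ : ∀ x y : L, ⁅φ x, y⁆ + ⁅x, φ y⁆ = 0)
    {α β : R} (hαβ : IsSMulRegular L (α + β)) (m n : ℕ) {x y : L}
    (hx : ((φ - α • 1) ^ m) x = 0) (hy : ((φ - β • 1) ^ n) y = 0) : ⁅x, y⁆ = 0 := by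
  have key : ∀ u v : L,
      (α + β) • ⁅u, v⁆ = -(⁅(φ - α • 1) u, v⁆ + ⁅u, (φ - β • 1) v⁆) := fun u v => by
    simp only [LinearMap.sub_apply, LinearMap.smul_apply, one_apply, sub_lie, lie_sub,
      smul_lie, lie_smul, add_smul]
    linear_combination (norm := module) hφ u v
  induction m generalizing x y n with
  | zero => simp_all
  | succ m ihm =>
    induction n generalizing y with
    | zero => simp_all
    | succ n ihn =>
      have hleft : ⁅(φ - α • 1) x, y⁆ = 0 := ihm (n + 1) (by rwa [← mul_apply, ← pow_succ]) hy
      have hright : ⁅x, (φ - β • 1) y⁆ = 0 := ihn (by rwa [← mul_apply, ← pow_succ])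
      exact hαβ.right_eq_zero_of_smul (by rw [key, hleft, hright, add_zero, neg_zero])

theorem lie_eq_zero_of_mem_maxGenEigenspace (hφ : ∀ x y : L, ⁅φ x, y⁆ + ⁅x, φ y⁆ = 0)
    {α β : R} (hαβ : IsSMulRegular L (α + β)) {x y : L}
    (hx : x ∈ maxGenEigenspace φ α) (hy : y ∈ maxGenEigenspace φ β) : ⁅x, y⁆ = 0 := by
  obtain ⟨m, hm⟩ := (mem_maxGenEigenspace φ α x).mp hx
  obtain ⟨n, hn⟩ := (mem_maxGenEigenspace φ β y).mp hy
  exact lie_eq_zero_of_pow_sub_smul_apply_eq_zero hφ hαβ m n hm hn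

end LieAlgebra

theorem cpa_genEigenspace_bracket_sum_zero_general
    (F : Type*) [Field F] (L : Type*) [LieRing L] [LieAlgebra F L]
    (φ : L →ₗ[F] L)
    (hcomm : ∀ x y : L, ⁅φ x, y⁆ = ⁅φ y, x⁆) :
    ∀ α β : F,
      (∃ x ∈ Module.End.maxGenEigenspace φ α, ∃ y ∈ Module.End.maxGenEigenspace φ β,
        ⁅x, y⁆ ≠ 0) → α + β = 0 := by
  rintro α β ⟨x, hx, y, hy, hxy⟩
  by_contra hαβ
  exact hxy <| LieAlgebra.lie_eq_zero_of_mem_maxGenEigenspace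
    (LieAlgebra.lie_map_add_lie_map_eq_zero_of_lie_map_comm hcomm) (.of_ne_zero hαβ) hx hy

/-- For an inner CPA-structure `x·y = ⁅φ(x),y⁆` over an algebraically closed field,
nonvanishing bracket of generalized eigenspaces forces `α + β = 0`. -/
theorem cpa_genEigenspace_bracket_sum_zero
    (F : Type*) [Field F] [IsAlgClosed F] (L : Type*) [LieRing L] [LieAlgebra F L]
    [FiniteDimensional F L]
    (φ : L →ₗ[F] L)
    (hcomm : ∀ x y : L, ⁅φ x, y⁆ = ⁅φ y, x⁆)
    (hpost : ∀ x y z : L, ⁅φ ⁅x, y⁆, z⁆ = ⁅φ x, ⁅φ y, z⁆⁆ - ⁅φ y, ⁅φ x, z⁆⁆)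
    (hder : ∀ x y z : L, ⁅φ x, ⁅y, z⁆⁆ = ⁅⁅φ x, y⁆, z⁆ + ⁅y, ⁅φ x, z⁆⁆) :
    ∀ α β : F,
      (∃ x ∈ Module.End.maxGenEigenspace φ α, ∃ y ∈ Module.End.maxGenEigenspace φ β,
        ⁅x, y⁆ ≠ 0) → α + β = 0 :=
  cpa_genEigenspace_bracket_sum_zero_general F L φ hcomm
end

section
/- Let g be a finite-dimensional Lie algebra over an algebraically closed field with an inner CPA-structure x·y = [φ(x),y] (φ a Lie algebra endomorphism), and let g = ⊕_α g_α be the generalized eigenspace decomposition of φ. Then n := g₀ (the generalized eigenspace for eigenvalue 0) and h := ⊕_{α≠0} g_α are ideals of g with g = n ⊕ h. -/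
/-!
Since `φ` is a Lie algebra morphism and `⁅φ x, y⁆` is symmetric in `x, y`,
`φ ⁅x, y⁆ = ⁅φ x, φ y⁆ = ⁅φ (φ y), x⁆ = -⁅x, φ² y⁆`, i.e. `φ ∘ ad x = ad x ∘ (-φ²)`.
So `ad x` carries generalized eigenvectors of `-φ²` to generalized eigenvectors of `φ` with the
same eigenvalue, and the generalized `β`-eigenspace of `φ` lies in the generalized
`-β²`-eigenspace of `-φ²`. Hence `⁅L, g_β⁆ ⊆ g_{-β²}`, which makes `g₀` and `⊕_{β ≠ 0} g_β`
ideals; they are complementary by the generalized eigenspace decomposition of `φ`.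
-/

open Module Module.End

namespace Module.End

variable {R M N : Type*} [CommRing R] [AddCommGroup M] [Module R M] [AddCommGroup N] [Module R N]

lemma mapsTo_maxGenEigenspace_of_comp_eq {f : End R N} {g : End R M} {T : M →ₗ[R] N}
    (h : f ∘ₗ T = T ∘ₗ g) (μ : R) :
    Set.MapsTo T (maxGenEigenspace g μ) (maxGenEigenspace f μ) := by
  have hμ : (f - μ • 1) ∘ₗ T = T ∘ₗ (g - μ • 1) := by
    rw [LinearMap.sub_comp, LinearMap.comp_sub, h]
    ext; simp
  rintro y hy
  obtain ⟨k, hk⟩ := (mem_maxGenEigenspace _ _ _).1 hy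
  refine (mem_maxGenEigenspace _ _ _).2 ⟨k, ?_⟩
  rw [← LinearMap.comp_apply, commute_pow_left_of_commute hμ k, LinearMap.comp_apply, hk,
    map_zero]

lemma maxGenEigenspace_le_maxGenEigenspace_neg_mul_self (f : End R M) (μ : R) :
    maxGenEigenspace f μ ≤ maxGenEigenspace (-(f * f)) (-(μ * μ)) := by
  intro y hy
  obtain ⟨k, hk⟩ := (mem_maxGenEigenspace _ _ _).1 hy
  refine (mem_maxGenEigenspace _ _ _).2 ⟨k, ?_⟩
  have hscalar : Commute f (μ • 1) := (Commute.one_right f).smul_right μ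
  have hfactor : -(f * f) - (-(μ * μ)) • (1 : End R M) = -((f + μ • 1) * (f - μ • 1)) := by
    rw [add_mul, mul_sub, mul_sub, hscalar.eq, smul_mul_smul_comm, one_mul, neg_smul]
    abel
  have hfactors : Commute (f + μ • 1) (f - μ • 1) :=
    ((Commute.refl f).sub_right hscalar).add_left (hscalar.symm.sub_right (Commute.refl _))
  rw [hfactor, neg_pow, mul_apply, hfactors.mul_pow, mul_apply, hk, map_zero, map_zero]

lemma isCompl_maxGenEigenspace_iSup_maxGenEigenspace_ne {K V : Type*} [Field K] [IsAlgClosed K]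
    [AddCommGroup V] [Module K V] [FiniteDimensional K V] (f : End K V) (μ : K) :
    IsCompl (maxGenEigenspace f μ) (⨆ α ∈ {a : K | a ≠ μ}, maxGenEigenspace f α) where
  disjoint := independent_maxGenEigenspace f μ
  codisjoint := by
    rw [codisjoint_iff, ← iSup_maxGenEigenspace_eq_top f]
    exact (iSup_split_single _ μ).symm

end Module.End

section CPA

variable {F L : Type*} [CommRing F] [LieRing L] [LieAlgebra F L] (φ : L →ₗ⁅F⁆ L)

lemma comp_ad_eq_ad_comp_neg_mul_self (hcomm : ∀ x y : L, ⁅φ x, y⁆ = ⁅φ y, x⁆) (x : L) :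
    (φ : End F L) ∘ₗ LieAlgebra.ad F L x =
      LieAlgebra.ad F L x ∘ₗ (-((φ : End F L) * (φ : End F L))) := by
  ext y
  calc φ ⁅x, y⁆ = ⁅φ x, φ y⁆ := φ.map_lie x y
    _ = ⁅φ (φ y), x⁆ := hcomm x (φ y)
    _ = ⁅x, -φ (φ y)⁆ := by rw [lie_neg, ← lie_skew]

lemma lie_mem_maxGenEigenspace_neg_mul_self (hcomm : ∀ x y : L, ⁅φ x, y⁆ = ⁅φ y, x⁆)
    {β : F} (x : L) {y : L} (hy : y ∈ maxGenEigenspace (φ : End F L) β) :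
    ⁅x, y⁆ ∈ maxGenEigenspace (φ : End F L) (-(β * β)) :=
  mapsTo_maxGenEigenspace_of_comp_eq (comp_ad_eq_ad_comp_neg_mul_self φ hcomm x) _
    (maxGenEigenspace_le_maxGenEigenspace_neg_mul_self _ β hy)

lemma lie_mem_maxGenEigenspace_zero (hcomm : ∀ x y : L, ⁅φ x, y⁆ = ⁅φ y, x⁆)
    (x : L) {y : L} (hy : y ∈ maxGenEigenspace (φ : End F L) 0) :
    ⁅x, y⁆ ∈ maxGenEigenspace (φ : End F L) 0 := by
  simpa using lie_mem_maxGenEigenspace_neg_mul_self φ hcomm x hy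

lemma lie_mem_iSup_maxGenEigenspace_ne_zero [IsDomain F]
    (hcomm : ∀ x y : L, ⁅φ x, y⁆ = ⁅φ y, x⁆) (x : L) {y : L}
    (hy : y ∈ ⨆ α ∈ {a : F | a ≠ 0}, maxGenEigenspace (φ : End F L) α) :
    ⁅x, y⁆ ∈ ⨆ α ∈ {a : F | a ≠ 0}, maxGenEigenspace (φ : End F L) α := by
  set S := ⨆ α ∈ {a : F | a ≠ 0}, maxGenEigenspace (φ : End F L) α
  have hS : S ≤ S.comap (LieAlgebra.ad F L x) := iSup₂_le fun α (hα : α ≠ 0) z hz =>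
    le_iSup₂ (f := fun α (_ : α ∈ {a : F | a ≠ 0}) => maxGenEigenspace (φ : End F L) α)
      (-(α * α)) (neg_ne_zero.2 (mul_ne_zero hα hα))
      (lie_mem_maxGenEigenspace_neg_mul_self φ hcomm x hz)
  exact hS hy

end CPA

theorem cpa_eigenspace_ideal_decomposition_general
    (F : Type*) [Field F] [IsAlgClosed F] (L : Type*) [LieRing L] [LieAlgebra F L]
    [FiniteDimensional F L]
    (φ : L →ₗ⁅F⁆ L)
    (hcomm : ∀ x y : L, ⁅φ x, y⁆ = ⁅φ y, x⁆) :
    ∃ N H : LieIdeal F L,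
      N.toSubmodule = Module.End.maxGenEigenspace (φ : L →ₗ[F] L) 0 ∧
      H.toSubmodule = (⨆ α ∈ {a : F | a ≠ 0},
        Module.End.maxGenEigenspace (φ : L →ₗ[F] L) α) ∧
      N ⊓ H = ⊥ ∧ N ⊔ H = ⊤ := by
  let N : LieIdeal F L :=
    { maxGenEigenspace (φ : End F L) 0 with
      lie_mem := lie_mem_maxGenEigenspace_zero φ hcomm _ }
  let H : LieIdeal F L :=
    { ⨆ α ∈ {a : F | a ≠ 0}, maxGenEigenspace (φ : End F L) α with
      lie_mem := lie_mem_iSup_maxGenEigenspace_ne_zero φ hcomm _ }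
  have hNH : IsCompl N H := by
    rw [← LieSubmodule.isCompl_toSubmodule]
    exact isCompl_maxGenEigenspace_iSup_maxGenEigenspace_ne _ 0
  exact ⟨N, H, rfl, rfl, hNH.inf_eq_bot, hNH.sup_eq_top⟩

/-- For an inner CPA-structure `x·y = ⁅φ(x),y⁆` with `φ` a Lie algebra endomorphism over an
algebraically closed field, the generalized eigenspace `g₀` of `φ` for eigenvalue `0` and the
sum `h` of the generalized eigenspaces for nonzero eigenvalues are ideals with `g = g₀ ⊕ h`. -/
theorem cpa_eigenspace_ideal_decomposition
    (F : Type*) [Field F] [IsAlgClosed F] (L : Type*) [LieRing L] [LieAlgebra F L]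
    [FiniteDimensional F L]
    (φ : L →ₗ⁅F⁆ L)
    (hcomm : ∀ x y : L, ⁅φ x, y⁆ = ⁅φ y, x⁆)
    (hpost : ∀ x y z : L, ⁅φ ⁅x, y⁆, z⁆ = ⁅φ x, ⁅φ y, z⁆⁆ - ⁅φ y, ⁅φ x, z⁆⁆)
    (hder : ∀ x y z : L, ⁅φ x, ⁅y, z⁆⁆ = ⁅⁅φ x, y⁆, z⁆ + ⁅y, ⁅φ x, z⁆⁆) :
    ∃ N H : LieIdeal F L,
      N.toSubmodule = Module.End.maxGenEigenspace (φ : L →ₗ[F] L) 0 ∧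
      H.toSubmodule = (⨆ α ∈ {a : F | a ≠ 0},
        Module.End.maxGenEigenspace (φ : L →ₗ[F] L) α) ∧
      N ⊓ H = ⊥ ∧ N ⊔ H = ⊤ :=
  cpa_eigenspace_ideal_decomposition_general F L φ hcomm
end

section
/- Let g be a finite-dimensional Lie algebra over an algebraically closed field of characteristic ≠ 2, with inner CPA-structure x·y = [φ(x),y] where φ is a Lie algebra automorphism all of whose eigenvalues are nonzero. Then the second derived subalgebra vanishes: [[g,g],[g,g]] = 0, i.e., g is metabelian. -/
/-!
Write `𝔤_α` for the generalized `α`-eigenspace of `φ`. Since `φ` is a Lie algebra morphism,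
`⁅𝔤_α, 𝔤_β⁆ ⊆ 𝔤_{αβ}`, and the symmetry `⁅φ x, y⁆ = ⁅φ y, x⁆` gives
`(α + β) ⁅x, y⁆ = ⁅(φ - β) y, x⁆ - ⁅(φ - α) x, y⁆`, so `⁅𝔤_α, 𝔤_β⁆ = 0` unless `α + β = 0`
(both by induction on the nilpotency orders). Hence only `u = ⁅x, y⁆ ∈ 𝔤_{-α²}` and
`v = ⁅z, w⁆ ∈ 𝔤_{-γ²}` with `z ∈ 𝔤_γ`, `w ∈ 𝔤_{-γ}` matter, and `⁅u, v⁆ = 0` unless `α² = -γ²`.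
In that case the Jacobi identity `⁅u, ⁅z, w⁆⁆ = ⁅⁅u, z⁆, w⁆ + ⁅z, ⁅u, w⁆⁆` kills both terms as
soon as `γ (α² + 1) ≠ 0`; as `2 ≠ 0`, one of `α² + 1`, `γ² + 1` is nonzero, and `𝔤_0 = 0`.
-/

namespace Module.End

variable {R M N : Type*} [CommRing R] [AddCommGroup M] [Module R M] [AddCommGroup N] [Module R N]

theorem mem_maxGenEigenspace_of_sub_smul_apply_mem {f : End R M} {μ : R} {x : M}
    (hx : (f - μ • 1) x ∈ f.maxGenEigenspace μ) : x ∈ f.maxGenEigenspace μ := by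
  obtain ⟨k, hk⟩ := (mem_maxGenEigenspace f μ _).mp hx
  exact (mem_maxGenEigenspace f μ x).mpr ⟨k + 1, by rwa [pow_succ, mul_apply]⟩

theorem maxGenEigenspace_induction₂ {f : End R M} {g : End R N} {α β : R} {P : M → N → Prop}
    (zero_left : ∀ y, P 0 y) (zero_right : ∀ x, P x 0)
    (step : ∀ x y, P ((f - α • 1) x) y → P ((f - α • 1) x) (g y) → P x ((g - β • 1) y) →
      P x y)
    {x : M} (hx : x ∈ f.maxGenEigenspace α) {y : N} (hy : y ∈ g.maxGenEigenspace β) :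
    P x y := by
  obtain ⟨m, hm⟩ := (mem_maxGenEigenspace f α x).mp hx
  obtain ⟨n, hn⟩ := (mem_maxGenEigenspace g β y).mp hy
  clear hx hy
  induction m generalizing x y n with
  | zero =>
    rw [pow_zero, one_apply] at hm
    exact hm ▸ zero_left y
  | succ m ihm =>
    induction n generalizing y with
    | zero =>
      rw [pow_zero, one_apply] at hn
      exact hn ▸ zero_right x
    | succ n ihn =>
      rw [pow_succ, mul_apply] at hm
      have hgy : ((g - β • 1) ^ (n + 1)) (g y) = 0 := by
        have hcomm : Commute g ((g - β • 1) ^ (n + 1)) :=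
          ((Commute.refl g).sub_right ((Commute.one_right g).smul_right β)).pow_right _
        rw [← mul_apply, ← hcomm.eq, mul_apply, hn, map_zero]
      have hn' : ((g - β • 1) ^ n) ((g - β • 1) y) = 0 := by rwa [pow_succ, mul_apply] at hn
      exact step x y (ihm hm (n := n + 1) hn) (ihm hm (n := n + 1) hgy) (ihn hn')

theorem eq_zero_of_mem_maxGenEigenspace_zero {K V : Type*} [Field K] [AddCommGroup V]
    [Module K V] {f : End K V} (hf : ¬ f.HasEigenvalue 0) {x : V}
    (hx : x ∈ f.maxGenEigenspace 0) : x = 0 := by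
  have : f.maxGenEigenspace 0 = ⊥ := by
    by_contra h
    exact hf ((hasUnifEigenvalue_iff_hasUnifEigenvalue_one (k := ⊤) (by simp)).mp h)
  rwa [this, Submodule.mem_bot] at hx

theorem iSup_maxGenEigenspace_induction {K V : Type*} [Field K] [IsAlgClosed K]
    [AddCommGroup V] [Module K V] [FiniteDimensional K V] (f : End K V) {motive : V → Prop}
    (mem : ∀ μ, ∀ x ∈ f.maxGenEigenspace μ, motive x) (zero : motive 0)
    (add : ∀ x y, motive x → motive y → motive (x + y)) (x : V) : motive x :=
  Submodule.iSup_induction _ (motive := motive)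
    (f.iSup_maxGenEigenspace_eq_top ▸ Submodule.mem_top) mem zero add

end Module.End

open Module Module.End

namespace LieHom

variable {K L : Type*} [Field K] [LieRing L] [LieAlgebra K L] (φ : L →ₗ⁅K⁆ L)

theorem lie_mem_maxGenEigenspace_mul {α β : K} {x y : L}
    (hx : x ∈ maxGenEigenspace (φ : End K L) α) (hy : y ∈ maxGenEigenspace (φ : End K L) β) :
    ⁅x, y⁆ ∈ maxGenEigenspace (φ : End K L) (α * β) := by
  refine maxGenEigenspace_induction₂ (P := fun x y ↦ ⁅x, y⁆ ∈ _) (by simp) (by simp)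
    (fun x y _ h₁ h₂ ↦ mem_maxGenEigenspace_of_sub_smul_apply_mem ?_) hx hy
  have key : ((φ : End K L) - (α * β) • 1) ⁅x, y⁆ =
      ⁅((φ : End K L) - α • 1) x, φ y⁆ + α • ⁅x, ((φ : End K L) - β • 1) y⁆ := by
    simp only [LinearMap.sub_apply, LinearMap.smul_apply, Module.End.one_apply, coe_toLinearMap,
      map_lie, sub_lie, lie_sub, smul_lie, lie_smul, smul_sub, smul_smul]
    abel
  rw [key]
  exact add_mem h₁ (Submodule.smul_mem _ α h₂)

variable {φ}

theorem lie_eq_zero_of_add_ne_zero (hcomm : ∀ x y : L, ⁅φ x, y⁆ = ⁅φ y, x⁆) {α β : K}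
    (hαβ : α + β ≠ 0) {x y : L} (hx : x ∈ maxGenEigenspace (φ : End K L) α)
    (hy : y ∈ maxGenEigenspace (φ : End K L) β) : ⁅x, y⁆ = 0 := by
  refine maxGenEigenspace_induction₂ (P := fun x y ↦ ⁅x, y⁆ = 0) (by simp) (by simp)
    (fun x y h₀ _ h₂ ↦ ?_) hx hy
  have key : (α + β) • ⁅x, y⁆ =
      -⁅x, ((φ : End K L) - β • 1) y⁆ - ⁅((φ : End K L) - α • 1) x, y⁆ := by
    simp only [LinearMap.sub_apply, LinearMap.smul_apply, Module.End.one_apply, coe_toLinearMap,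
      sub_lie, lie_sub, smul_lie, lie_smul, hcomm x y]
    rw [← lie_skew (φ y) x]
    module
  rw [h₀, h₂, neg_zero, sub_zero, smul_eq_zero] at key
  exact key.resolve_left hαβ

theorem lie_lie_eq_zero_of_mul_add_ne_zero (hcomm : ∀ x y : L, ⁅φ x, y⁆ = ⁅φ y, x⁆)
    {μ γ δ : K} (h₁ : μ * γ + δ ≠ 0) (h₂ : γ + μ * δ ≠ 0) {u z w : L}
    (hu : u ∈ maxGenEigenspace (φ : End K L) μ) (hz : z ∈ maxGenEigenspace (φ : End K L) γ)
    (hw : w ∈ maxGenEigenspace (φ : End K L) δ) : ⁅u, ⁅z, w⁆⁆ = 0 := by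
  rw [leibniz_lie,
    lie_eq_zero_of_add_ne_zero hcomm h₁ (φ.lie_mem_maxGenEigenspace_mul hu hz) hw,
    lie_eq_zero_of_add_ne_zero hcomm h₂ hz (φ.lie_mem_maxGenEigenspace_mul hu hw), add_zero]

theorem lie_lie_eq_zero_of_sq_add_one_ne_zero (hcomm : ∀ x y : L, ⁅φ x, y⁆ = ⁅φ y, x⁆)
    (hφ : ¬ HasEigenvalue (φ : End K L) 0) {α γ : K} (hα : α ^ 2 + 1 ≠ 0) {u z w : L}
    (hu : u ∈ maxGenEigenspace (φ : End K L) (α * -α))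
    (hz : z ∈ maxGenEigenspace (φ : End K L) γ) (hw : w ∈ maxGenEigenspace (φ : End K L) (-γ)) :
    ⁅u, ⁅z, w⁆⁆ = 0 := by
  rcases eq_or_ne γ 0 with rfl | hγ
  · rw [eq_zero_of_mem_maxGenEigenspace_zero hφ hz, zero_lie, lie_zero]
  have hne : γ * (α ^ 2 + 1) ≠ 0 := mul_ne_zero hγ hα
  refine lie_lie_eq_zero_of_mul_add_ne_zero hcomm ?_ ?_ hu hz hw
  · contrapose! hne; linear_combination -hne
  · contrapose! hne; linear_combination hne

theorem lie_lie_lie_eq_zero (hcomm : ∀ x y : L, ⁅φ x, y⁆ = ⁅φ y, x⁆)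
    (hφ : ¬ HasEigenvalue (φ : End K L) 0) (h2 : (2 : K) ≠ 0) {α β γ δ : K} {x y z w : L}
    (hx : x ∈ maxGenEigenspace (φ : End K L) α) (hy : y ∈ maxGenEigenspace (φ : End K L) β)
    (hz : z ∈ maxGenEigenspace (φ : End K L) γ) (hw : w ∈ maxGenEigenspace (φ : End K L) δ) :
    ⁅⁅x, y⁆, ⁅z, w⁆⁆ = 0 := by
  by_cases hαβ : α + β = 0
  swap; · rw [lie_eq_zero_of_add_ne_zero hcomm hαβ hx hy, zero_lie]
  by_cases hγδ : γ + δ = 0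
  swap; · rw [lie_eq_zero_of_add_ne_zero hcomm hγδ hz hw, lie_zero]
  obtain rfl : β = -α := eq_neg_of_add_eq_zero_right hαβ
  obtain rfl : δ = -γ := eq_neg_of_add_eq_zero_right hγδ
  have hxy := φ.lie_mem_maxGenEigenspace_mul hx hy
  have hzw := φ.lie_mem_maxGenEigenspace_mul hz hw
  by_cases hsum : α * -α + γ * -γ = 0
  swap; · exact lie_eq_zero_of_add_ne_zero hcomm hsum hxy hzw
  have hαγ : α ^ 2 + 1 ≠ 0 ∨ γ ^ 2 + 1 ≠ 0 := by
    by_contra! h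
    exact h2 (by linear_combination h.1 + h.2 + hsum)
  rcases hαγ with hα | hγ
  · exact lie_lie_eq_zero_of_sq_add_one_ne_zero hcomm hφ hα hxy hz hw
  · rw [← lie_skew, lie_lie_eq_zero_of_sq_add_one_ne_zero hcomm hφ hγ hzw hx hy, neg_zero]

end LieHom

theorem cpa_automorphism_metabelian_general
    (F : Type*) [Field F] [IsAlgClosed F] (h2 : (2 : F) ≠ 0)
    (L : Type*) [LieRing L] [LieAlgebra F L] [FiniteDimensional F L]
    (φ : L →ₗ⁅F⁆ L)
    (heig : ∀ α : F, Module.End.HasEigenvalue (φ : L →ₗ[F] L) α → α ≠ 0)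
    (hcomm : ∀ x y : L, ⁅φ x, y⁆ = ⁅φ y, x⁆) :
    ∀ x y z w : L, ⁅⁅x, y⁆, ⁅z, w⁆⁆ = 0 := by
  have hφ : ¬ HasEigenvalue (φ : End F L) 0 := fun h ↦ heig 0 h rfl
  intro x y z w
  induction x using iSup_maxGenEigenspace_induction (φ : End F L) with
  | zero => simp
  | add x₁ x₂ h₁ h₂ => rw [add_lie, add_lie, h₁, h₂, add_zero]
  | mem α x hx =>
    induction y using iSup_maxGenEigenspace_induction (φ : End F L) with
    | zero => simp
    | add y₁ y₂ h₁ h₂ => rw [lie_add, add_lie, h₁, h₂, add_zero]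
    | mem β y hy =>
      induction z using iSup_maxGenEigenspace_induction (φ : End F L) with
      | zero => simp
      | add z₁ z₂ h₁ h₂ => rw [add_lie, lie_add, h₁, h₂, add_zero]
      | mem γ z hz =>
        induction w using iSup_maxGenEigenspace_induction (φ : End F L) with
        | zero => simp
        | add w₁ w₂ h₁ h₂ => rw [lie_add, lie_add, h₁, h₂, add_zero]
        | mem δ w hw => exact LieHom.lie_lie_lie_eq_zero hcomm hφ h2 hx hy hz hw

/-- Over an algebraically closed field of characteristic ≠ 2, a Lie algebra admitting an inner
CPA-structure `x·y = ⁅φ(x),y⁆` with `φ` a Lie algebra automorphism all of whose eigenvalues are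
nonzero is metabelian: `[[g,g],[g,g]] = 0`. -/
theorem cpa_automorphism_metabelian
    (F : Type*) [Field F] [IsAlgClosed F] (h2 : (2 : F) ≠ 0)
    (L : Type*) [LieRing L] [LieAlgebra F L] [FiniteDimensional F L]
    (φ : L →ₗ⁅F⁆ L) (hbij : Function.Bijective φ)
    (heig : ∀ α : F, Module.End.HasEigenvalue (φ : L →ₗ[F] L) α → α ≠ 0)
    (hcomm : ∀ x y : L, ⁅φ x, y⁆ = ⁅φ y, x⁆)
    (hpost : ∀ x y z : L, ⁅φ ⁅x, y⁆, z⁆ = ⁅φ x, ⁅φ y, z⁆⁆ - ⁅φ y, ⁅φ x, z⁆⁆)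
    (hder : ∀ x y z : L, ⁅φ x, ⁅y, z⁆⁆ = ⁅⁅φ x, y⁆, z⁆ + ⁅y, ⁅φ x, z⁆⁆) :
    ∀ x y z w : L, ⁅⁅x, y⁆, ⁅z, w⁆⁆ = 0 :=
  cpa_automorphism_metabelian_general F h2 L φ heig hcomm
end

section
/- Let g be a finite-dimensional perfect Lie algebra over a field of characteristic ≠ 2 which is taut (every Lie algebra homomorphism g → Der(g) maps g into Inn(g)). Then every CPA-structure on g is trivial: x·y = 0 for all x,y ∈ g. -/
/-!
The CPA axioms say that left multiplication `x ↦ x · _` is a Lie algebra homomorphism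
`g → Der(g)`, so tautness gives a function `P : g → g`, not necessarily linear, with
`x · y = [P x, y]`. Commutativity makes `P` skew-adjoint: `[P x, y] = -[x, P y]`. Expanding
`[a, b] · w` once by this and once through the homomorphism property shows that `P³ w - P w`
commutes with every bracket, hence is central as `g` is perfect; feeding this back, so is
`P² w - P w`. Then `x · y = -[x, P² y] = [P x, P y]` is antisymmetric as well as symmetric.
-/

namespace LieAlgebra

variable {R L : Type*} [CommRing R] [LieRing L] [LieAlgebra R L]

theorem lie_eq_of_forall_lie_lie_eq (hperf : derivedSeries R L 1 = ⊤) {u v : L}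
    (h : ∀ a b : L, ⁅⁅a, b⁆, u⁆ = ⁅⁅a, b⁆, v⁆) (x : L) : ⁅x, u⁆ = ⁅x, v⁆ := by
  have hx : x ∈ Submodule.span R {z : L | ∃ a b : L, ⁅a, b⁆ = z} := by
    rw [← coe_derivedSeries_one_eq, hperf]
    trivial
  induction hx using Submodule.span_induction with
  | mem _ hz => obtain ⟨a, b, rfl⟩ := hz; exact h a b
  | zero => simp only [zero_lie]
  | add _ _ _ _ hy hz => rw [add_lie, add_lie, hy, hz]
  | smul c _ _ hy => rw [smul_lie, smul_lie, hy]

end LieAlgebra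

section CPAStructure

variable {R L : Type*} [CommRing R] [LieRing L] [LieAlgebra R L]

structure IsCPAStructure (mul : L →ₗ[R] L →ₗ[R] L) : Prop where
  comm : ∀ x y : L, mul x y = mul y x
  lie_mul : ∀ x y z : L, mul ⁅x, y⁆ z = mul x (mul y z) - mul y (mul x z)
  mul_lie : ∀ x y z : L, mul x ⁅y, z⁆ = ⁅mul x y, z⁆ + ⁅y, mul x z⁆

namespace IsCPAStructure

variable {mul : L →ₗ[R] L →ₗ[R] L} (h : IsCPAStructure mul)
include h

def leftMul : L →ₗ⁅R⁆ LieDerivation R L L where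
  toFun x :=
    { toLinearMap := mul x
      leibniz' := fun a b => by rw [h.mul_lie, ← lie_skew b]; abel }
  map_add' x y := by ext; simp
  map_smul' c x := by ext; simp
  map_lie' {x y} := by ext; simp [h.lie_mul]

theorem exists_mul_eq_lie
    (htaut : ∀ (f : L →ₗ⁅R⁆ LieDerivation R L L) (x : L), ∃ y : L, f x = LieDerivation.ad R L y) :
    ∃ P : L → L, ∀ x y : L, mul x y = ⁅P x, y⁆ := by
  choose P hP using htaut h.leftMul
  exact ⟨P, fun x y => by simpa [leftMul] using LieDerivation.congr_fun (hP x) y⟩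

section InnerRepresentative

variable {P : L → L} (hP : ∀ x y : L, mul x y = ⁅P x, y⁆)
include hP

theorem lie_apply_left (x y : L) : ⁅P x, y⁆ = -⁅x, P y⁆ := by
  rw [← hP, h.comm, hP, lie_skew]

theorem mul_eq_neg_lie (x y : L) : mul x y = -⁅x, P y⁆ := by
  rw [hP, h.lie_apply_left hP]

theorem mul_lie_apply (a b w : L) : mul ⁅a, b⁆ w = -⁅⁅a, P (P b)⁆, w⁆ := by
  rw [h.lie_mul, hP a (mul b w), hP b w, hP b (mul a w), hP a w, ← lie_lie,
    h.lie_apply_left hP, neg_lie]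

theorem mul_mul_apply (b w v : L) : mul (mul b w) v = ⁅⁅b, P (P (P w))⁆, v⁆ := by
  rw [h.mul_eq_neg_lie hP b w, map_neg, LinearMap.neg_apply, h.mul_lie_apply hP, neg_neg]

theorem lie_apply_apply_apply (hperf : LieAlgebra.derivedSeries R L 1 = ⊤) (x w : L) :
    ⁅x, P (P (P w))⁆ = ⁅x, P w⁆ := by
  refine LieAlgebra.lie_eq_of_forall_lie_lie_eq hperf (fun a b => neg_injective ?_) x
  rw [← h.mul_eq_neg_lie hP ⁅a, b⁆ w, h.lie_mul, h.comm a (mul b w), h.comm b (mul a w),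
    h.mul_mul_apply hP, h.mul_mul_apply hP, lie_lie, ← lie_skew a ⁅b, _⁆, ← lie_skew b ⁅a, _⁆]
  abel

theorem lie_apply_apply (hperf : LieAlgebra.derivedSeries R L 1 = ⊤) (x w : L) :
    ⁅x, P (P w)⁆ = ⁅x, P w⁆ := by
  refine LieAlgebra.lie_eq_of_forall_lie_lie_eq hperf (fun a b => neg_injective ?_) x
  calc -⁅⁅a, b⁆, P (P w)⁆
      = -⁅⁅a, P (P b)⁆, P w⁆ := by rw [← h.mul_eq_neg_lie hP _ (P w), h.mul_lie_apply hP]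
    _ = -⁅⁅a, P (P (P (P b)))⁆, w⁆ := by rw [← h.mul_eq_neg_lie hP _ w, h.mul_lie_apply hP]
    _ = -⁅⁅a, b⁆, P w⁆ := by
      rw [h.lie_apply_apply_apply hP hperf, ← h.mul_lie_apply hP, h.mul_eq_neg_lie hP]

theorem mul_eq_lie_apply_apply (hperf : LieAlgebra.derivedSeries R L 1 = ⊤) (x y : L) :
    mul x y = ⁅P x, P y⁆ := by
  rw [h.mul_eq_neg_lie hP, ← h.lie_apply_apply hP hperf, h.lie_apply_left hP]

theorem eq_zero [IsDomain R] [Module.IsTorsionFree R L] (h2 : (2 : R) ≠ 0) (hperf : LieAlgebra.derivedSeries R L 1 = ⊤) (x y : L) :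
    mul x y = 0 := by
  have hneg : mul x y = -mul x y :=
    calc mul x y = ⁅P x, P y⁆ := h.mul_eq_lie_apply_apply hP hperf x y
      _ = -⁅P y, P x⁆ := (lie_skew _ _).symm
      _ = -mul x y := by rw [← h.mul_eq_lie_apply_apply hP hperf, h.comm]
  have h2xy : (2 : R) • mul x y = 0 := by
    rw [two_smul]
    nth_rewrite 1 [hneg]
    exact neg_add_cancel _
  exact (smul_eq_zero.mp h2xy).resolve_left h2

end InnerRepresentative

end IsCPAStructure

end CPAStructure

theorem perfect_taut_cpa_trivial_general
    (K : Type*) [Field K] (h2 : (2 : K) ≠ 0)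
    (L : Type*) [LieRing L] [LieAlgebra K L]
    (hperf : LieAlgebra.derivedSeries K L 1 = ⊤)
    (htaut : ∀ (f : L →ₗ⁅K⁆ LieDerivation K L L) (x : L),
      ∃ y : L, f x = LieDerivation.ad K L y)
    (mul : L →ₗ[K] L →ₗ[K] L)
    (hcomm : ∀ x y : L, mul x y = mul y x)
    (hpost : ∀ x y z : L, mul ⁅x, y⁆ z = mul x (mul y z) - mul y (mul x z))
    (hder : ∀ x y z : L, mul x ⁅y, z⁆ = ⁅mul x y, z⁆ + ⁅y, mul x z⁆) :
    ∀ x y : L, mul x y = 0 := by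
  have h : IsCPAStructure mul := ⟨hcomm, hpost, hder⟩
  obtain ⟨P, hP⟩ := h.exists_mul_eq_lie htaut
  exact h.eq_zero hP h2 hperf

/-- A finite-dimensional perfect taut Lie algebra over a field of characteristic ≠ 2
admits only the trivial CPA-structure. -/
theorem perfect_taut_cpa_trivial
    (K : Type*) [Field K] (h2 : (2 : K) ≠ 0)
    (L : Type*) [LieRing L] [LieAlgebra K L] [FiniteDimensional K L]
    (hperf : LieAlgebra.derivedSeries K L 1 = ⊤)
    (htaut : ∀ (f : L →ₗ⁅K⁆ LieDerivation K L L) (x : L),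
      ∃ y : L, f x = LieDerivation.ad K L y)
    (mul : L →ₗ[K] L →ₗ[K] L)
    (hcomm : ∀ x y : L, mul x y = mul y x)
    (hpost : ∀ x y z : L, mul ⁅x, y⁆ z = mul x (mul y z) - mul y (mul x z))
    (hder : ∀ x y z : L, mul x ⁅y, z⁆ = ⁅mul x y, z⁆ + ⁅y, mul x z⁆) :
    ∀ x y : L, mul x y = 0 :=
  perfect_taut_cpa_trivial_general K h2 L hperf htaut mul hcomm hpost hder
end

section
/- Let g be a simple finite-dimensional Lie algebra over a field of characteristic 2 which is taut. Then every CPA-structure on g is either trivial (x·y = 0) or adjoint (x·y = [x,y]). -/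
open Polynomial

/-! Auxiliary lemmas for the classification of CPA-structures on simple taut Lie algebras
in characteristic two. -/

section Aux

lemma cpa_char2_neg (K : Type*) [Field K] [CharP K 2] {L : Type*} [AddCommGroup L] [Module K L]
    (v : L) : -v = v := by
  have h : v + v = 0 := by
    have h0 : (2 : K) • v = 0 := by
      have h2 : (2 : K) = 0 := by exact_mod_cast CharP.cast_eq_zero K 2
      rw [h2, zero_smul]
    rwa [two_smul] at h0
  exact neg_eq_of_add_eq_zero_left h

lemma cpa_central_eq_zero (K : Type*) [Field K] {L : Type*} [LieRing L] [LieAlgebra K L]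
    [LieAlgebra.IsSimple K L] (a : L) (h : ∀ z : L, ⁅a, z⁆ = 0) : a = 0 := by
  have hc : a ∈ LieAlgebra.center K L := fun x => by
    rw [← lie_skew, h x, neg_zero]
  rw [LieAlgebra.center_eq_bot K L] at hc
  exact hc

lemma cpa_exists_bracket_ne (K : Type*) [Field K] {L : Type*} [LieRing L] [LieAlgebra K L]
    [LieAlgebra.IsSimple K L] : ∃ x y : L, ⁅x, y⁆ ≠ (0 : L) := by
  by_contra h
  push_neg at h
  exact LieAlgebra.IsSimple.non_abelian K (L := L) ⟨fun x y => h x y⟩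

lemma cpa_span_brackets_eq_top (K : Type*) [Field K] {L : Type*} [LieRing L] [LieAlgebra K L]
    [LieAlgebra.IsSimple K L] :
    Submodule.span K {m : L | ∃ x y : L, ⁅x, y⁆ = m} = ⊤ := by
  have hI : ⁅(⊤ : LieIdeal K L), (⊤ : LieIdeal K L)⁆ = ⊤ := by
    rcases LieAlgebra.IsSimple.eq_bot_or_eq_top ⁅(⊤ : LieIdeal K L), (⊤ : LieIdeal K L)⁆ with h | h
    · exfalso
      obtain ⟨x, y, hxy⟩ := cpa_exists_bracket_ne K (L := L)
      apply hxy
      have hmem : ⁅x, y⁆ ∈ ⁅(⊤ : LieIdeal K L), (⊤ : LieIdeal K L)⁆ :=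
        LieSubmodule.lie_mem_lie (LieSubmodule.mem_top x) (LieSubmodule.mem_top y)
      rw [h] at hmem
      exact hmem
    · exact h
  rw [eq_top_iff]
  intro w _
  have hw : w ∈ ⁅(⊤ : LieIdeal K L), (⊤ : LieIdeal K L)⁆ := by
    rw [hI]; exact LieSubmodule.mem_top w
  have hw2 : w ∈ Submodule.span K
      {m : L | ∃ x ∈ (⊤ : LieIdeal K L), ∃ n ∈ (⊤ : LieIdeal K L), ⁅x, n⁆ = m} := by
    rw [← LieSubmodule.lieIdeal_oper_eq_linear_span', LieSubmodule.mem_toSubmodule]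
    exact hw
  refine Submodule.span_mono ?_ hw2
  rintro m ⟨x, -, y, -, h⟩
  exact ⟨x, y, h⟩

lemma cpa_vanish_on_brackets (K : Type*) [Field K] {L : Type*} [LieRing L] [LieAlgebra K L]
    [LieAlgebra.IsSimple K L] (g : L →ₗ[K] L) (h : ∀ y z : L, g ⁅y, z⁆ = 0) : g = 0 := by
  ext w
  have hw : w ∈ Submodule.span K {m : L | ∃ x y : L, ⁅x, y⁆ = m} := by
    rw [cpa_span_brackets_eq_top K]; trivial
  simp only [LinearMap.zero_apply]
  refine Submodule.span_induction ?_ ?_ ?_ ?_ hw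
  · rintro m ⟨x, y, rfl⟩; exact h x y
  · simp
  · intro a b _ _ ha hb; simp [map_add, ha, hb]
  · intro c a _ ha; simp [map_smul, ha]

lemma cpa_ker_cases (K : Type*) [Field K] {L : Type*} [LieRing L] [LieAlgebra K L]
    [LieAlgebra.IsSimple K L] (θ : L →ₗ[K] L)
    (hθ : ∀ x y : L, θ ⁅x, y⁆ = ⁅θ (θ x), y⁆) :
    θ = 0 ∨ Function.Injective θ := by
  let I : LieIdeal K L :=
    { LinearMap.ker θ with
      lie_mem := by
        intro x m hm
        have hm' : θ m = 0 := hm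
        have h1 : θ ⁅m, x⁆ = 0 := by rw [hθ, hm', map_zero, zero_lie]
        show θ ⁅x, m⁆ = 0
        rw [← lie_skew, map_neg, h1, neg_zero] }
  rcases LieAlgebra.IsSimple.eq_bot_or_eq_top I with h | h
  · right
    rw [← LinearMap.ker_eq_bot]
    rw [eq_bot_iff]
    intro x hx
    have hxI : x ∈ I := hx
    rw [h] at hxI
    exact (LieSubmodule.mem_bot _).mp hxI
  · left
    ext x
    have hxI : x ∈ I := by rw [h]; exact LieSubmodule.mem_top x
    exact hxI

variable {K : Type*} [Field K] {L : Type*} [LieRing L] [LieAlgebra K L]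

lemma cpa_pow_comm_apply (f : Module.End K L) (m : ℕ) (u : L) :
    f ((f ^ m) u) = (f ^ m) (f u) := by
  rw [← Module.End.mul_apply, ← Module.End.mul_apply, ← pow_succ, ← pow_succ']

lemma cpa_hpow (f : Module.End K L) (hb : ∀ x y : L, f ⁅x, y⁆ = ⁅f (f x), y⁆)
    (k : ℕ) (x y : L) : (f ^ k) ⁅x, y⁆ = ⁅(f ^ (2 * k)) x, y⁆ := by
  induction k generalizing x y with
  | zero => simp
  | succ k ih =>
    rw [pow_succ' f k, Module.End.mul_apply, ih, hb]
    congr 1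
    rw [show 2 * (k + 1) = 2 * k + 1 + 1 by ring]
    rw [pow_succ, pow_succ, Module.End.mul_apply, Module.End.mul_apply]
    rw [cpa_pow_comm_apply, cpa_pow_comm_apply]

lemma cpa_haeval (f : Module.End K L) (hb : ∀ x y : L, f ⁅x, y⁆ = ⁅f (f x), y⁆)
    (q : K[X]) (x y : L) : (aeval f q) ⁅x, y⁆ = ⁅(aeval (f * f) q) x, y⁆ := by
  induction q using Polynomial.induction_on' with
  | add p q hp hq => rw [map_add, map_add, LinearMap.add_apply, LinearMap.add_apply, hp, hq,
      add_lie]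
  | monomial n c =>
    simp only [aeval_monomial, Module.End.mul_apply, Module.algebraMap_end_apply]
    rw [show ((f * f) ^ n) = f ^ (2 * n) by rw [← pow_two, ← pow_mul]]
    rw [cpa_hpow f hb n x y, smul_lie]

lemma cpa_hcomp (f : Module.End K L) (q : K[X]) :
    aeval f (q.comp (X ^ 2 : K[X])) = aeval (f * f) q := by
  induction q using Polynomial.induction_on' with
  | add p q hp hq => rw [add_comp, map_add, map_add, hp, hq]
  | monomial n c =>
    rw [show ((monomial n c : K[X]).comp (X ^ 2)) = C c * (X ^ 2) ^ n by
      rw [comp, eval₂_monomial]]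
    rw [map_mul, aeval_C, map_pow, map_pow, aeval_X, aeval_monomial]
    rw [← pow_two]

lemma cpa_dvd_lemma [CharP K 2] (m : K[X]) (hm0 : m ≠ 0) (hmon : m.Monic)
    (hdvd : m ∣ m.comp (X ^ 2)) :
    ∃ n : ℕ, 0 < n ∧ ∃ d : ℕ, m ∣ (X ^ 2 ^ n - X) ^ d := by
  classical
  let A := AlgebraicClosure K
  haveI : CharP A 2 := charP_of_injective_algebraMap (algebraMap K A).injective 2
  set mA := m.map (algebraMap K A) with hmA
  have hmA0 : mA ≠ 0 := Polynomial.map_ne_zero hm0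
  set S : Finset A := mA.roots.toFinset with hSdef
  have hmem : ∀ α : A, α ∈ S ↔ aeval α m = 0 := by
    intro α
    rw [hSdef, Multiset.mem_toFinset, Polynomial.mem_roots hmA0, Polynomial.IsRoot.def, hmA,
      Polynomial.eval_map, ← Polynomial.aeval_def]
  have hsq : ∀ α : A, α ∈ S → α ^ 2 ∈ S := by
    intro α hα
    rw [hmem] at hα ⊢
    obtain ⟨r, hr⟩ := hdvd
    have h0 : aeval α (m.comp (X ^ 2)) = 0 := by rw [hr, map_mul, hα, zero_mul]
    rwa [Polynomial.aeval_comp, map_pow, Polynomial.aeval_X] at h0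
  let e : {x // x ∈ S} → {x // x ∈ S} := fun a => ⟨(a : A) ^ 2, hsq _ a.2⟩
  have einj : Function.Injective e := by
    intro a b hab
    have hab1 : ((a : A)) ^ 2 = ((b : A)) ^ 2 := congrArg Subtype.val hab
    have hab2 : frobenius A 2 (a : A) = frobenius A 2 (b : A) := by
      rwa [frobenius_def, frobenius_def]
    exact Subtype.ext ((frobenius A 2).injective hab2)
  have ebij : Function.Bijective e := Finite.injective_iff_bijective.mp einj
  let σ : Equiv.Perm {x // x ∈ S} := Equiv.ofBijective e ebij
  let n := orderOf σ
  have hn : 0 < n := orderOf_pos σ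
  have hσ : σ ^ n = 1 := pow_orderOf_eq_one σ
  have hiter : ∀ (k : ℕ) (a : {x // x ∈ S}),
      (((σ ^ k) a : {x // x ∈ S}) : A) = (a : A) ^ 2 ^ k := by
    intro k
    induction k with
    | zero => intro a; simp
    | succ k ih =>
      intro a
      rw [pow_succ σ k, Equiv.Perm.mul_apply, ih]
      have hcoe : ((σ a : {x // x ∈ S}) : A) = (a : A) ^ 2 := rfl
      rw [hcoe, ← pow_mul, ← pow_succ']
  have hfix : ∀ α ∈ S, α ^ 2 ^ n = α := by
    intro α hα
    have hh := hiter n ⟨α, hα⟩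
    rw [hσ] at hh
    simpa using hh.symm
  refine ⟨n, hn, mA.roots.card, ?_⟩
  have hsplit : mA = (mA.roots.map fun a => X - C a).prod :=
    (IsAlgClosed.splits mA).eq_prod_roots_of_monic (hmon.map _)
  have hdvd2 : mA ∣ (X ^ 2 ^ n - X : A[X]) ^ mA.roots.card := by
    conv_lhs => rw [hsplit]
    have h1 : (mA.roots.map fun a => X - C a).prod ∣
        (mA.roots.map fun _ => (X ^ 2 ^ n - X : A[X])).prod := by
      apply Multiset.prod_dvd_prod_of_dvd
      intro α hα
      rw [Polynomial.dvd_iff_isRoot]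
      have hαS : α ∈ S := Multiset.mem_toFinset.mpr hα
      show Polynomial.eval α _ = 0
      rw [Polynomial.eval_sub, Polynomial.eval_pow, Polynomial.eval_X, hfix α hαS, sub_self]
    rwa [Multiset.map_const', Multiset.prod_replicate] at h1
  rw [← Polynomial.map_dvd_map' (algebraMap K A)]
  rw [Polynomial.map_pow, Polynomial.map_sub, Polynomial.map_pow, Polynomial.map_X]
  exact hdvd2

end Aux
section Aux2
variable (K : Type*) [Field K] [CharP K 2] {L : Type*} [LieRing L] [LieAlgebra K L]
  [FiniteDimensional K L] [LieAlgebra.IsSimple K L]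

lemma cpa_exists_pow_eq (f : Module.End K L) (hb : ∀ x y : L, f ⁅x, y⁆ = ⁅f (f x), y⁆) :
    ∃ n : ℕ, 0 < n ∧ f ^ 2 ^ n = f := by
  have hsub : ∀ a b : L, a - b = a + b := fun a b => by
    rw [sub_eq_add_neg, cpa_char2_neg K b]
  have hint : IsIntegral K f := LinearMap.isIntegral f
  have hmon : (minpoly K f).Monic := minpoly.monic hint
  have hm0 : minpoly K f ≠ 0 := hmon.ne_zero
  have h2 : aeval (f * f) (minpoly K f) = 0 := by
    apply LinearMap.ext
    intro x
    rw [LinearMap.zero_apply]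
    apply cpa_central_eq_zero K
    intro z
    rw [← cpa_haeval f hb (minpoly K f) x z, minpoly.aeval, LinearMap.zero_apply]
  have hdvd : minpoly K f ∣ (minpoly K f).comp (X ^ 2) :=
    minpoly.dvd K f (by rw [cpa_hcomp]; exact h2)
  obtain ⟨n, hn, d, hdvd2⟩ := cpa_dvd_lemma (minpoly K f) hm0 hmon hdvd
  set θ : Module.End K L := f ^ 2 ^ n - f with hθdef
  have hθd : θ ^ d = 0 := by
    obtain ⟨r, hr⟩ := hdvd2
    have h3 : aeval f (((X : K[X]) ^ 2 ^ n - X) ^ d) = 0 := by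
      rw [hr, map_mul, minpoly.aeval, zero_mul]
    rwa [map_pow, map_sub, map_pow, aeval_X] at h3
  have hA : ∀ x : L, (f ^ (2 * 2 ^ n)) x = (f ^ 2 ^ n) ((f ^ 2 ^ n) x) := by
    intro x
    rw [two_mul, pow_add, Module.End.mul_apply]
  have hB : ∀ x : L, (f ^ 2) x = f (f x) := by
    intro x
    rw [pow_two, Module.End.mul_apply]
  have hθb : ∀ x y : L, θ ⁅x, y⁆ = ⁅θ (θ x), y⁆ := by
    intro x y
    have e1 : θ ⁅x, y⁆ = ⁅(f ^ (2 * 2 ^ n)) x - (f ^ 2) x, y⁆ := by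
      rw [hθdef, LinearMap.sub_apply, cpa_hpow f hb (2 ^ n) x y]
      have h1 := cpa_hpow f hb 1 x y
      rw [pow_one, mul_one] at h1
      rw [h1, sub_lie]
    have e2 : θ (θ x) = (f ^ (2 * 2 ^ n)) x - (f ^ 2) x := by
      rw [hθdef]
      simp only [LinearMap.sub_apply, map_sub]
      rw [show (f ^ 2 ^ n) (f x) = f ((f ^ 2 ^ n) x) from (cpa_pow_comm_apply f (2 ^ n) x).symm]
      set w := f ((f ^ 2 ^ n) x)
      set Ax := (f ^ 2 ^ n) ((f ^ 2 ^ n) x)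
      set Bx := f (f x)
      rw [hA, hB, hsub Ax Bx]
      rw [hsub Ax w, hsub w Bx, hsub (Ax + w) (w + Bx)]
      have hww : w + w = 0 := by
        have := hsub w w
        rw [sub_self] at this
        exact this.symm
      rw [show Ax + w + (w + Bx) = Ax + (w + w) + Bx by abel, hww, add_zero]
    rw [e1, e2]
  rcases cpa_ker_cases K θ hθb with h0 | hinj
  · refine ⟨n, hn, ?_⟩
    rw [hθdef] at h0
    rwa [sub_eq_zero] at h0
  · exfalso
    obtain ⟨x, y, hxy⟩ := cpa_exists_bracket_ne K (L := L)
    apply hxy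
    have hinj2 : Function.Injective (θ ^ d : Module.End K L) := by
      rw [Module.End.coe_pow]
      exact Function.Injective.iterate hinj d
    apply hinj2
    rw [hθd]
    simp

end Aux2
section Aux3
variable (K : Type*) [Field K] [CharP K 2] {L : Type*} [LieRing L] [LieAlgebra K L]
  [FiniteDimensional K L] [LieAlgebra.IsSimple K L]

lemma cpa_phi_eq (f : Module.End K L)
    (h1 : ∀ x y : L, ⁅f x, y⁆ = ⁅x, f y⁆)
    (h2 : ∀ x y : L, f ⁅x, y⁆ = ⁅f x, f y⁆) :
    f = 0 ∨ f = LinearMap.id := by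
  have hb : ∀ x y : L, f ⁅x, y⁆ = ⁅f (f x), y⁆ := fun x y => by
    rw [h2, ← h1 (f x) y]
  obtain ⟨n, hn, hNf⟩ := cpa_exists_pow_eq K f hb
  rcases cpa_ker_cases K f hb with h0 | hinj
  · left; exact h0
  right
  have hpowinj : ∀ k : ℕ, Function.Injective (f ^ k : Module.End K L) := fun k => by
    rw [Module.End.coe_pow]
    exact Function.Injective.iterate hinj k
  have hcan : ∀ s t : ℕ, t ≤ s → (f : Module.End K L) ^ s = f ^ t → f ^ (s - t) = 1 := by
    intro s t hts h
    ext x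
    apply hpowinj t
    rw [← Module.End.mul_apply, ← pow_add]
    rw [Nat.add_sub_cancel' hts, h]
    simp
  rcases eq_or_lt_of_le (Nat.one_le_iff_ne_zero.mpr (Nat.pos_iff_ne_zero.mp hn)) with hn1 | hn2
  · -- n = 1 : f ^ 2 = f, injective, so f = id
    have hf2 : f ^ 2 = f := by
      rw [show (2 : ℕ) = 2 ^ n by rw [← hn1]; norm_num]
      exact hNf
    ext x
    apply hinj
    have hx := congrArg (fun g : Module.End K L => g x) hf2
    simpa [pow_two, Module.End.mul_apply] using hx
  · -- n ≥ 2
    set a : ℕ := 2 ^ (n - 1) with hadef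
    have h2a : 2 * a = 2 ^ n := by
      rw [hadef, ← pow_succ']
      congr 1
      omega
    have ha2 : 2 ≤ a := by
      rw [hadef]
      calc 2 = 2 ^ 1 := by norm_num
      _ ≤ 2 ^ (n - 1) := Nat.pow_le_pow_right (by norm_num) (by omega)
    have hstar : ∀ x y : L, ⁅f x, y⁆ = (f ^ a) ⁅x, y⁆ := by
      intro x y
      rw [cpa_hpow f hb a x y, h2a, hNf]
    have hstark : ∀ (k : ℕ) (x y : L), ⁅(f ^ k) x, y⁆ = ((f ^ a) ^ k) ⁅x, y⁆ := by
      intro k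
      induction k with
      | zero => intro x y; simp
      | succ k ih =>
        intro x y
        rw [pow_succ' f k, Module.End.mul_apply, hstar ((f ^ k) x) y, ih,
          pow_succ' (f ^ a) k, Module.End.mul_apply]
    have hβγ : ∀ x y z : L, (f ^ a) ⁅x, ⁅y, z⁆⁆ = ((f ^ a) ^ a) ⁅x, ⁅y, z⁆⁆ := by
      intro x y z
      rw [← hstar x ⁅y, z⁆, leibniz_lie, hstar x y, hstar x z]
      have e2 : ⁅(f ^ a) ⁅x, y⁆, z⁆ = ((f ^ a) ^ a) ⁅⁅x, y⁆, z⁆ := hstark a ⁅x, y⁆ z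
      have e3 : ⁅y, (f ^ a) ⁅x, z⁆⁆ = ((f ^ a) ^ a) ⁅⁅x, z⁆, y⁆ := by
        rw [← lie_skew y ((f ^ a) ⁅x, z⁆), cpa_char2_neg K, hstark a ⁅x, z⁆ y]
      rw [e2, e3, ← map_add ((f ^ a) ^ a)]
      congr 1
      rw [leibniz_lie x y z]
      congr 1
      rw [← lie_skew y ⁅x, z⁆, cpa_char2_neg K]
    have hD : (f : Module.End K L) ^ a = (f ^ a) ^ a := by
      have h0 : ∀ u w : L, ((f ^ a : Module.End K L) - (f ^ a) ^ a) ⁅u, w⁆ = 0 := by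
        intro u w
        have hg : (((f ^ a : Module.End K L) - (f ^ a) ^ a) ∘ₗ
            (LieAlgebra.ad K L u) : L →ₗ[K] L) = 0 := by
          apply cpa_vanish_on_brackets K
          intro y z
          rw [LinearMap.comp_apply, LieAlgebra.ad_apply, LinearMap.sub_apply, hβγ u y z,
            sub_self]
        have hgw := congrArg (fun g : L →ₗ[K] L => g w) hg
        simpa [LinearMap.comp_apply, LieAlgebra.ad_apply] using hgw
      have hv := cpa_vanish_on_brackets K ((f ^ a : Module.End K L) - (f ^ a) ^ a)
        (fun y z => h0 y z)
      rwa [sub_eq_zero] at hv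
    have hfa : (f : Module.End K L) ^ (a * a) = f ^ a := by
      rw [pow_mul]
      exact hD.symm
    have ht : (f : Module.End K L) ^ (2 ^ n - 1) = 1 := by
      apply hcan (2 ^ n) 1 Nat.one_le_two_pow
      rw [pow_one]
      exact hNf
    have hs : (f : Module.End K L) ^ (a * a - a) = 1 := by
      apply hcan (a * a) a (Nat.le_mul_of_pos_left a (by omega))
      exact hfa
    have hd1 : orderOf f ∣ 2 ^ n - 1 := orderOf_dvd_of_pow_eq_one ht
    have hd2 : orderOf f ∣ a * a - a := orderOf_dvd_of_pow_eq_one hs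
    have hgcd : Nat.gcd (2 ^ n - 1) (a * a - a) = 1 := by
      have hs_eq : ∀ b : ℕ, b * b - b = b * (b - 1) := by
        intro b
        cases b with
        | zero => simp
        | succ b' => rw [Nat.succ_sub_one, Nat.mul_succ, Nat.add_sub_cancel]
      rw [hs_eq a]
      have hodd : Odd (2 ^ n - 1) := by
        have hev : Even (2 ^ n) := by
          rw [← h2a]; exact even_two_mul a
        exact Nat.Even.sub_odd Nat.one_le_two_pow hev odd_one
      have hc1 : Nat.Coprime (2 ^ n - 1) a := by
        rw [hadef]
        exact Nat.Coprime.pow_right _ (Nat.coprime_two_right.mpr hodd)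
      have hc2 : Nat.Coprime (2 ^ n - 1) (a - 1) := by
        have heq : 2 ^ n - 1 - 2 * (a - 1) = 1 := by omega
        have hg1 := Nat.gcd_dvd_left (2 ^ n - 1) (a - 1)
        have hg2 := Nat.gcd_dvd_right (2 ^ n - 1) (a - 1)
        have hg3 : Nat.gcd (2 ^ n - 1) (a - 1) ∣ 2 * (a - 1) := Dvd.dvd.mul_left hg2 2
        have hg4 := Nat.dvd_sub hg1 hg3
        rw [heq] at hg4
        exact Nat.eq_one_of_dvd_one hg4
      exact Nat.Coprime.mul_right hc1 hc2
    have hord : orderOf f ∣ 1 := by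
      rw [← hgcd]
      exact Nat.dvd_gcd hd1 hd2
    have hord1 : orderOf f = 1 := Nat.eq_one_of_dvd_one hord
    have hf1 : f = 1 := orderOf_eq_one_iff.mp hord1
    rw [hf1]
    rfl

end Aux3
/-- A simple taut finite-dimensional Lie algebra in characteristic 2 admits only the trivial
and the adjoint CPA-structure. -/
theorem simple_taut_char_two_cpa
    (K : Type*) [Field K] [CharP K 2]
    (L : Type*) [LieRing L] [LieAlgebra K L] [FiniteDimensional K L]
    [LieAlgebra.IsSimple K L]
    (htaut : ∀ (f : L →ₗ⁅K⁆ LieDerivation K L L) (x : L),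
      ∃ y : L, f x = LieDerivation.ad K L y)
    (mul : L →ₗ[K] L →ₗ[K] L)
    (hcomm : ∀ x y : L, mul x y = mul y x)
    (hpost : ∀ x y z : L, mul ⁅x, y⁆ z = mul x (mul y z) - mul y (mul x z))
    (hder : ∀ x y z : L, mul x ⁅y, z⁆ = ⁅mul x y, z⁆ + ⁅y, mul x z⁆) :
    (∀ x y : L, mul x y = 0) ∨ (∀ x y : L, mul x y = ⁅x, y⁆) := by
  classical
  have hneg : ∀ v : L, -v = v := cpa_char2_neg K
  let D : L → LieDerivation K L L := fun x =>
    { toLinearMap := mul x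
      leibniz' := by
        intro a b
        show mul x ⁅a, b⁆ = ⁅a, mul x b⁆ - ⁅b, mul x a⁆
        rw [hder x a b, sub_eq_add_neg, ← lie_skew (mul x a) b]
        abel }
  have hDapp : ∀ x z : L, (D x) z = mul x z := fun x z => rfl
  let F : L →ₗ⁅K⁆ LieDerivation K L L :=
    { toFun := D
      map_add' := by
        intro x y
        ext z
        show mul (x + y) z = (D x) z + (D y) z
        rw [hDapp, hDapp, map_add, LinearMap.add_apply]
      map_smul' := by
        intro c x
        ext z
        show mul (c • x) z = (c • (D x)) z
        rw [map_smul]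
        rfl
      map_lie' := by
        intro x y
        ext z
        show mul ⁅x, y⁆ z = _
        rw [LieDerivation.commutator_apply]
        exact hpost x y z }
  have hchoice : ∀ x : L, ∃ y : L, F x = LieDerivation.ad K L y := htaut F
  let φ0 : L → L := fun x => Classical.choose (hchoice x)
  have hφ0 : ∀ x z : L, mul x z = ⁅φ0 x, z⁆ := by
    intro x z
    have hx := Classical.choose_spec (hchoice x)
    have hxz := congrArg (fun D : LieDerivation K L L => D z) hx
    rw [show (F x) z = mul x z from rfl] at hxz
    rw [hxz]
    have h4 := congrArg (fun g : L →ₗ[K] L => g z)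
      (LieDerivation.coe_ad_apply_eq_ad_apply (Classical.choose (hchoice x)) (R := K) (L := L))
    rw [show ((LieDerivation.ad K L (Classical.choose (hchoice x))) z)
        = ((LieDerivation.ad K L (Classical.choose (hchoice x)) : L →ₗ[K] L) z) from rfl, h4,
      LieAlgebra.ad_apply]
  have huniq : ∀ u v : L, (∀ z : L, ⁅u, z⁆ = ⁅v, z⁆) → u = v := by
    intro u v h
    have hz : ∀ z : L, ⁅u - v, z⁆ = 0 := fun z => by rw [sub_lie, h z, sub_self]
    have := cpa_central_eq_zero K _ hz
    exact sub_eq_zero.mp this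
  let φ : Module.End K L :=
    { toFun := φ0
      map_add' := by
        intro x y
        apply huniq
        intro z
        rw [add_lie, ← hφ0 x z, ← hφ0 y z, ← hφ0 (x + y) z, map_add, LinearMap.add_apply]
      map_smul' := by
        intro c x
        apply huniq
        intro z
        rw [RingHom.id_apply, smul_lie, ← hφ0 x z, ← hφ0 (c • x) z, map_smul,
          LinearMap.smul_apply] }
  have hmul : ∀ x z : L, mul x z = ⁅φ x, z⁆ := hφ0
  have h1 : ∀ x y : L, ⁅φ x, y⁆ = ⁅x, φ y⁆ := by
    intro x y
    rw [← hmul x y, hcomm x y, hmul y x, ← lie_skew (φ y) x, hneg]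
  have h2 : ∀ x y : L, φ ⁅x, y⁆ = ⁅φ x, φ y⁆ := by
    intro x y
    apply huniq
    intro z
    have hrhs : ⁅(⁅φ x, φ y⁆ : L), z⁆ = ⁅φ x, ⁅φ y, z⁆⁆ - ⁅φ y, ⁅φ x, z⁆⁆ := by
      rw [leibniz_lie (φ x) (φ y) z, ← lie_skew (φ y) ⁅φ x, z⁆, hneg]
      abel
    rw [hrhs, ← hmul ⁅x, y⁆ z, hpost x y z, hmul x (mul y z), hmul y (mul x z),
      hmul y z, hmul x z]
  rcases cpa_phi_eq K φ h1 h2 with h | h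
  · left
    intro x y
    rw [hmul x y, h, LinearMap.zero_apply, zero_lie]
  · right
    intro x y
    rw [hmul x y, h, LinearMap.id_apply]
end

section
/- Let g be a simple finite-dimensional Lie algebra with g ≅ Out(g). Then g is taut if and only if the short exact sequence 0 → Inn(g) → Der(g) → Out(g) → 0 does not split (i.e., there is no Lie algebra homomorphism section Out(g) → Der(g)). -/
/-!
For any homomorphism `φ : g → Der(g)`, the composite `g → Der(g) → Out(g) ≅ g` is either zero
(then `φ` lands in `Inn(g)`) or, `g` being simple, injective and hence bijective by counting
dimensions; its inverse followed by `φ` is then a section. Conversely, a section composed with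
`g ≅ Out(g)` is a homomorphism `g → Der(g)` lifting an isomorphism, so it cannot land in `Inn(g)`.
-/

open Function

namespace LieIdeal.Quotient

variable {R A : Type*} [CommRing R] [LieRing A] [LieAlgebra R A]

def mk (J : LieIdeal R A) : A →ₗ⁅R⁆ A ⧸ J :=
  { (LieSubmodule.Quotient.mk' J : A →ₗ[R] A ⧸ J) with map_lie' := rfl }

lemma exists_section_of_bijective_mk_comp {L : Type*} [LieRing L] [LieAlgebra R L]
    {J : LieIdeal R A} (φ : L →ₗ⁅R⁆ A) (hφ : Bijective ((mk J).comp φ)) :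
    ∃ s : A ⧸ J →ₗ⁅R⁆ A, ∀ d : A ⧸ J, LieSubmodule.Quotient.mk' J (s d) = d :=
  ⟨φ.comp (LieEquiv.ofBijective _ hφ).symm.toLieHom,
    fun d ↦ (LieEquiv.ofBijective _ hφ).apply_symm_apply d⟩

end LieIdeal.Quotient

lemma LieAlgebra.IsSimple.injective_of_apply_ne_zero {R L M : Type*} [CommRing R] [LieRing L]
    [LieAlgebra R L] [LieRing M] [LieAlgebra R M] [LieAlgebra.IsSimple R L]
    {f : L →ₗ⁅R⁆ M} {x : L} (hx : f x ≠ 0) : Injective f := by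
  rw [← LieHom.ker_eq_bot]
  refine (eq_bot_or_eq_top f.ker).resolve_right fun htop ↦ hx ?_
  exact f.mem_ker.mp (htop ▸ LieSubmodule.mem_top x)

lemma LieHom.bijective_of_injective_of_finrank_eq {K L M : Type*} [Field K] [LieRing L]
    [LieAlgebra K L] [LieRing M] [LieAlgebra K M] [FiniteDimensional K L]
    [FiniteDimensional K M] {f : L →ₗ⁅K⁆ M} (hf : Injective f)
    (hrank : Module.finrank K L = Module.finrank K M) : Bijective f :=
  ⟨hf, (LinearMap.injective_iff_surjective_of_finrank_eq_finrank
    (f := (f : L →ₗ[K] M)) hrank).mp hf⟩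

theorem simple_out_iso_taut_iff_nonsplit_general
    (K : Type*) [Field K] (L : Type*) [LieRing L] [LieAlgebra K L]
    [FiniteDimensional K L] [LieAlgebra.IsSimple K L]
    (I : LieIdeal K (LieDerivation K L L))
    (e : L ≃ₗ⁅K⁆ (LieDerivation K L L ⧸ I)) :
    (∀ (φ : L →ₗ⁅K⁆ LieDerivation K L L) (x : L), φ x ∈ I) ↔
      ¬ ∃ s : (LieDerivation K L L ⧸ I) →ₗ⁅K⁆ LieDerivation K L L,
          ∀ d : LieDerivation K L L ⧸ I, LieSubmodule.Quotient.mk' I (s d) = d := by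
  constructor
  · rintro taut ⟨s, hs⟩
    have := LieAlgebra.IsSimple.nontrivial K L
    obtain ⟨x, hx⟩ := exists_ne (0 : L)
    have hex : e x = 0 := by
      rw [← hs (e x)]
      exact (LieSubmodule.Quotient.mk_eq_zero I).mpr (taut (s.comp e.toLieHom) x)
    exact hx (e.toLinearEquiv.map_eq_zero_iff.mp hex)
  · intro hns φ x
    by_contra hx
    have := Module.Finite.equiv e.toLinearEquiv
    have hinj : Injective ((LieIdeal.Quotient.mk I).comp φ) :=
      LieAlgebra.IsSimple.injective_of_apply_ne_zero (x := x)
        (mt (LieSubmodule.Quotient.mk_eq_zero I).mp hx)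
    exact hns (LieIdeal.Quotient.exists_section_of_bijective_mk_comp φ
      (LieHom.bijective_of_injective_of_finrank_eq hinj e.toLinearEquiv.finrank_eq))

/-- For a simple Lie algebra `g` with `g ≅ Out(g)`, `g` is taut if and only if the exact
sequence `0 → Inn(g) → Der(g) → Out(g) → 0` does not split. -/
theorem simple_out_iso_taut_iff_nonsplit
    (K : Type*) [Field K] (L : Type*) [LieRing L] [LieAlgebra K L]
    [FiniteDimensional K L] [LieAlgebra.IsSimple K L]
    (I : LieIdeal K (LieDerivation K L L))
    (hI : ∀ D : LieDerivation K L L, D ∈ I ↔ ∃ x : L, D = LieDerivation.ad K L x)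
    (e : L ≃ₗ⁅K⁆ (LieDerivation K L L ⧸ I)) :
    (∀ (φ : L →ₗ⁅K⁆ LieDerivation K L L) (x : L), φ x ∈ I) ↔
      ¬ ∃ s : (LieDerivation K L L ⧸ I) →ₗ⁅K⁆ LieDerivation K L L,
          ∀ d : LieDerivation K L L ⧸ I, LieSubmodule.Quotient.mk' I (s d) = d :=
  simple_out_iso_taut_iff_nonsplit_general K L I e
end

section
/- Let g be a finite-dimensional Lie algebra with an inner CPA-structure x·y = [φ(x),y] where φ : g → g is a nilpotent Lie algebra endomorphism. Then g^∞ · g = 0, where g^∞ = ⋂_{i} g^i is the intersection of the lower central series. -/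
/-! Commutativity of the product makes `φ` skew for the bracket, `⁅φ x, y⁆ = -⁅x, φ y⁆`.
Feeding this into the Jacobi identity shows, by induction along the lower central series, that
`⁅φ x, y⁆ = -⁅x, φ^(2^(n+1)-1) y⁆` for `x ∈ g^n`. Since `φ` is nilpotent, the right-hand side
vanishes for `n` large, and every element of `g^∞` lies in all the `g^n`. -/

open LieModule

namespace LieHom

variable {R L : Type*} [CommRing R] [LieRing L] [LieAlgebra R L] (φ : L →ₗ⁅R⁆ L)

theorem iterate_map_lie (k : ℕ) (a b : L) : φ^[k] ⁅a, b⁆ = ⁅φ^[k] a, φ^[k] b⁆ := by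
  induction k with
  | zero => rfl
  | succ k ih => simp only [Function.iterate_succ_apply', ih, map_lie]

theorem lie_iterate_left_of_skew (hφ : ∀ x y : L, ⁅φ x, y⁆ = -⁅x, φ y⁆) (k : ℕ) (x y : L) :
    ⁅φ^[k] x, y⁆ = (-1 : ℤ) ^ k • ⁅x, φ^[k] y⁆ := by
  induction k generalizing x y with
  | zero => simp
  | succ k ih =>
    rw [Function.iterate_succ_apply, ih, hφ, Function.iterate_succ_apply', pow_succ,
      mul_neg_one, neg_smul, smul_neg]

def skewPowSubmodule (k : ℕ) : Submodule R L where
  carrier := {x | ∀ y, ⁅φ x, y⁆ = -⁅x, φ^[k] y⁆}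
  zero_mem' := by simp
  add_mem' {u v} hu hv y := by rw [map_add, add_lie, hu y, hv y, add_lie, neg_add]
  smul_mem' c u hu y := by rw [map_smul, smul_lie, hu y, smul_lie, smul_neg]

theorem lie_mem_skewPowSubmodule (hφ : ∀ x y : L, ⁅φ x, y⁆ = -⁅x, φ y⁆) {m : ℕ} (hm : Odd m)
    (a : L) {b : L} (hb : b ∈ φ.skewPowSubmodule m) :
    ⁅a, b⁆ ∈ φ.skewPowSubmodule (2 * m + 1) := by
  intro y
  have hexp : 2 * m + 1 = m + (m + 1) := by ring
  have ha : ⁅φ a, ⁅φ b, y⁆⁆ = -⁅a, ⁅b, φ^[2 * m + 1] y⁆⁆ := by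
    rw [hb y, lie_neg, hφ, φ.map_lie, hb, lie_neg, neg_neg, hexp, Function.iterate_add_apply,
      Function.iterate_succ_apply']
  have hb' : ⁅φ b, ⁅φ a, y⁆⁆ = -⁅b, ⁅a, φ^[2 * m + 1] y⁆⁆ := by
    rw [hφ a, lie_neg, hb, iterate_map_lie, lie_iterate_left_of_skew φ hφ, hm.neg_one_pow,
      neg_one_smul, lie_neg, neg_neg, hexp, Function.iterate_add_apply, Function.iterate_succ_apply]
  rw [φ.map_lie, lie_lie, ha, hb', lie_lie]
  abel

theorem mem_skewPowSubmodule_of_mem_lowerCentralSeries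
    (hφ : ∀ x y : L, ⁅φ x, y⁆ = -⁅x, φ y⁆) (n : ℕ) {x : L}
    (hx : x ∈ lowerCentralSeries R L L n) : x ∈ φ.skewPowSubmodule (2 ^ (n + 1) - 1) := by
  induction n generalizing x with
  | zero => exact fun y => by simpa using hφ x y
  | succ n ih =>
    have hodd : Odd (2 ^ (n + 1) - 1) := Nat.Even.sub_odd Nat.one_le_two_pow
      ((Nat.even_pow' n.succ_ne_zero).2 even_two) odd_one
    have hexp : 2 ^ (n + 1 + 1) - 1 = 2 * (2 ^ (n + 1) - 1) + 1 := by
      have := @Nat.one_le_two_pow (n + 1)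
      rw [pow_succ]
      omega
    rw [lowerCentralSeries_succ, ← LieSubmodule.mem_toSubmodule,
      LieSubmodule.lieIdeal_oper_eq_linear_span'] at hx
    rw [hexp]
    refine Submodule.span_le.2 ?_ hx
    rintro _ ⟨a, -, b, hb, rfl⟩
    exact φ.lie_mem_skewPowSubmodule hφ hodd a (ih hb)

end LieHom

theorem cpa_nilpotent_phi_lcs_inf_acts_trivially_general
    (K : Type*) [Field K] (L : Type*) [LieRing L] [LieAlgebra K L]
    (φ : L →ₗ⁅K⁆ L) (hnil : IsNilpotent (φ : L →ₗ[K] L))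
    (hcomm : ∀ x y : L, ⁅φ x, y⁆ = ⁅φ y, x⁆) :
    ∀ x ∈ ⨅ i : ℕ, LieModule.lowerCentralSeries K L L i, ∀ y : L, ⁅φ x, y⁆ = 0 := by
  intro x hx y
  obtain ⟨k, hk⟩ := hnil
  have hskew : ∀ x y : L, ⁅φ x, y⁆ = -⁅x, φ y⁆ := fun x y => by rw [hcomm, ← lie_skew]
  have hxk : x ∈ lowerCentralSeries K L L k := (LieSubmodule.mem_iInf _).1 hx k
  have hvanish : (φ : Module.End K L) ^ (2 ^ (k + 1) - 1) = 0 := by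
    refine pow_eq_zero_of_le ?_ hk
    have := @Nat.lt_two_pow_self k
    rw [pow_succ]
    omega
  rw [φ.mem_skewPowSubmodule_of_mem_lowerCentralSeries hskew k hxk y, ← LieHom.coe_toLinearMap,
    ← Module.End.pow_apply, hvanish, LinearMap.zero_apply, lie_zero, neg_zero]

/-- For an inner CPA-structure `x·y = ⁅φ(x),y⁆` with `φ` a nilpotent Lie algebra endomorphism,
the intersection of the lower central series acts trivially: `g^∞ · g = 0`. -/
theorem cpa_nilpotent_phi_lcs_inf_acts_trivially
    (K : Type*) [Field K] (L : Type*) [LieRing L] [LieAlgebra K L]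
    [FiniteDimensional K L]
    (φ : L →ₗ⁅K⁆ L) (hnil : IsNilpotent (φ : L →ₗ[K] L))
    (hcomm : ∀ x y : L, ⁅φ x, y⁆ = ⁅φ y, x⁆)
    (hpost : ∀ x y z : L, ⁅φ ⁅x, y⁆, z⁆ = ⁅φ x, ⁅φ y, z⁆⁆ - ⁅φ y, ⁅φ x, z⁆⁆)
    (hder : ∀ x y z : L, ⁅φ x, ⁅y, z⁆⁆ = ⁅⁅φ x, y⁆, z⁆ + ⁅y, ⁅φ x, z⁆⁆) :
    ∀ x ∈ ⨅ i : ℕ, LieModule.lowerCentralSeries K L L i, ∀ y : L, ⁅φ x, y⁆ = 0 :=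
  cpa_nilpotent_phi_lcs_inf_acts_trivially_general K L φ hnil hcomm
end
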